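/- arXiv:1605.00247 — 2 statements merged into one kernel-verified Lean document; each statement's English description precedes it below -/
import Mathlib

section
/- Let f be the arc of a circle of radius r > R, with angular span less than π, represented as a function on [−R, R] with f(−R) = f(R) = 0, lying above the chord. Then f minimizes the functional G_r(h) = ∫_{−R}^{R} (√(1 + h'(x)²) − h(x)/r) dx among all Lipschitz functions h on [−R, R] with h(−R) = h(R) = 0. -/
/-!
The arc's slope `p = -x / √(r² - x²)` satisfies `p / √(1 + p²) = -x / r` (the graph has
curvature `1 / r`). By convexity of `p ↦ √(1 + p²)`, at almost every `x ∈ [-R, R]`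
`√(1 + h'²) - h / r ≥ √(1 + f'²) - f / r - (x (h - f))' / r`,
and the last term integrates to zero because `x (h - f)` is absolutely continuous and vanishes
at `±R`.
-/

open Real intervalIntegral MeasureTheory Set

theorem sqrt_one_add_sq_add_mul_le (p q : ℝ) :
    √(1 + p ^ 2) + (q - p) * (p / √(1 + p ^ 2)) ≤ √(1 + q ^ 2) := by
  have hs : 0 < √(1 + p ^ 2) := by positivity
  have hs2 : √(1 + p ^ 2) ^ 2 = 1 + p ^ 2 := sq_sqrt (by positivity)
  have ht2 : √(1 + q ^ 2) ^ 2 = 1 + q ^ 2 := sq_sqrt (by positivity)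
  -- Cauchy–Schwarz: `(1 + p q)² ≤ (1 + p²)(1 + q²)`
  have hcs : 1 + p * q ≤ √(1 + p ^ 2) * √(1 + q ^ 2) := by
    nlinarith [sq_nonneg (p - q), sqrt_nonneg (1 + q ^ 2),
      mul_pos hs (sqrt_pos.2 (by positivity : (0:ℝ) < 1 + q ^ 2))]
  rw [← sub_nonneg]
  have : √(1 + q ^ 2) - (√(1 + p ^ 2) + (q - p) * (p / √(1 + p ^ 2)))
      = (√(1 + p ^ 2) * √(1 + q ^ 2) - (1 + p * q)) / √(1 + p ^ 2) := by
    field_simp; nlinarith [hs2]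
  rw [this]; exact div_nonneg (by linarith) hs.le

theorem sqrt_one_add_sq_le_one_add_abs (y : ℝ) : √(1 + y ^ 2) ≤ 1 + |y| :=
  (sqrt_le_left (by positivity)).2 (by nlinarith [abs_nonneg y, sq_abs y])

theorem AbsolutelyContinuousOnInterval.intervalIntegrable_sqrt_one_add_deriv_sq_sub_div
    {u : ℝ → ℝ} {a b : ℝ} (hu : AbsolutelyContinuousOnInterval u a b) (c : ℝ) :
    IntervalIntegrable (fun x => √(1 + deriv u x ^ 2) - u x / c) volume a b := by
  refine IntervalIntegrable.sub ?_ (hu.continuousOn.div_const c).intervalIntegrable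
  refine ((intervalIntegrable_const (c := (1:ℝ))).add hu.intervalIntegrable_deriv.abs).mono_fun
    ((measurable_deriv u).pow_const 2 |>.const_add 1 |>.sqrt).aestronglyMeasurable
    (Filter.Eventually.of_forall fun x => ?_)
  simp only [norm_eq_abs, abs_of_nonneg (sqrt_nonneg _)]
  exact (sqrt_one_add_sq_le_one_add_abs _).trans (le_abs_self _)

noncomputable def circleSlope (r x : ℝ) : ℝ := -x / √(r ^ 2 - x ^ 2)

theorem hasDerivAt_sqrt_sq_sub_sq {r x : ℝ} (hx : x ^ 2 < r ^ 2) :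
    HasDerivAt (fun y => √(r ^ 2 - y ^ 2)) (circleSlope r x) x := by
  have hpos : r ^ 2 - x ^ 2 ≠ 0 := by linarith
  convert ((hasDerivAt_pow 2 x).const_sub (r ^ 2)).sqrt hpos using 1
  rw [circleSlope]
  field_simp
  ring

theorem contDiffOn_sqrt_sq_sub_sq {r : ℝ} {s : Set ℝ} (hs : ∀ x ∈ s, x ^ 2 < r ^ 2) :
    ContDiffOn ℝ 1 (fun y => √(r ^ 2 - y ^ 2)) s :=
  (contDiffOn_const.sub (contDiffOn_id.pow 2)).sqrt fun x hx => by
    simp only [id]; linarith [hs x hx]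

theorem circleSlope_div_sqrt_one_add_sq {r x : ℝ} (hr : 0 < r) (hx : x ^ 2 < r ^ 2) :
    circleSlope r x / √(1 + circleSlope r x ^ 2) = -x / r := by
  have hs : 0 < √(r ^ 2 - x ^ 2) := sqrt_pos.2 (by linarith)
  have hs2 : √(r ^ 2 - x ^ 2) ^ 2 = r ^ 2 - x ^ 2 := sq_sqrt (by linarith)
  have h1 : 1 + circleSlope r x ^ 2 = (r / √(r ^ 2 - x ^ 2)) ^ 2 := by
    rw [circleSlope]; field_simp; linarith
  rw [h1, sqrt_sq (by positivity), circleSlope]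
  field_simp

theorem circle_calibration_le {r x : ℝ} {f h : ℝ → ℝ} (hr : 0 < r) (hx : x ^ 2 < r ^ 2)
    (hf : HasDerivAt f (circleSlope r x) x) (hh : DifferentiableAt ℝ h x) :
    √(1 + deriv f x ^ 2) - f x / r - deriv (fun y => y * (h y - f y)) x / r
      ≤ √(1 + deriv h x ^ 2) - h x / r := by
  have hg : deriv (fun y => y * (h y - f y)) x
      = 1 * (h x - f x) + x * (deriv h x - circleSlope r x) :=
    ((hasDerivAt_id' x).mul (hh.hasDerivAt.sub hf)).deriv
  have htan := sqrt_one_add_sq_add_mul_le (circleSlope r x) (deriv h x)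
  rw [circleSlope_div_sqrt_one_add_sq hr hx] at htan
  rw [hf.deriv, hg]
  have e : √(1 + circleSlope r x ^ 2) - f x / r
        - (1 * (h x - f x) + x * (deriv h x - circleSlope r x)) / r
      = √(1 + circleSlope r x ^ 2) + (deriv h x - circleSlope r x) * (-x / r) - h x / r := by
    ring
  linarith

/-- The circular arc `f(x) = √(r² − x²) − √(r² − R²)` of radius `r > R`
minimizes `G_r(h) = ∫_{−R}^{R} (√(1 + h'(x)²) − h(x)/r) dx` among all
Lipschitz functions `h` on `[−R, R]` with `h(−R) = h(R) = 0`. -/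
theorem arc_minimizes (R r : ℝ) (hR : 0 < R) (hRr : R < r)
    (f : ℝ → ℝ) (hf : f = fun x => Real.sqrt (r ^ 2 - x ^ 2) - Real.sqrt (r ^ 2 - R ^ 2))
    (h : ℝ → ℝ) (hlip : ∃ K : NNReal, LipschitzWith K h)
    (hbd₁ : h (-R) = 0) (hbd₂ : h R = 0) :
    (∫ x in (-R)..R, (Real.sqrt (1 + (deriv f x) ^ 2) - f x / r))
      ≤ ∫ x in (-R)..R, (Real.sqrt (1 + (deriv h x) ^ 2) - h x / r) := by
  obtain ⟨K, hK⟩ := hlip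
  have hr : 0 < r := hR.trans hRr
  have hlt : ∀ x ∈ uIcc (-R) R, x ^ 2 < r ^ 2 := fun x hx => by
    rw [uIcc_of_le (by linarith)] at hx
    nlinarith [hx.1, hx.2]
  have hfac : AbsolutelyContinuousOnInterval f (-R) R :=
    hf ▸ ((contDiffOn_sqrt_sq_sub_sq hlt).sub contDiffOn_const).absolutelyContinuousOnInterval
  have hhac : AbsolutelyContinuousOnInterval h (-R) R :=
    hK.lipschitzOnWith.absolutelyContinuousOnInterval
  have hgac : AbsolutelyContinuousOnInterval (fun x => x * (h x - f x)) (-R) R :=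
    LipschitzWith.id.lipschitzOnWith.absolutelyContinuousOnInterval.mul (hhac.sub hfac)
  have hg0 : ∫ x in (-R)..R, deriv (fun y => y * (h y - f y)) x = 0 := by
    rw [hgac.integral_deriv_eq_sub]
    simp [hf, hbd₁, hbd₂]
  calc (∫ x in (-R)..R, (√(1 + deriv f x ^ 2) - f x / r))
      = ∫ x in (-R)..R, (√(1 + deriv f x ^ 2) - f x / r
          - deriv (fun y => y * (h y - f y)) x / r) := by
        rw [integral_sub (hfac.intervalIntegrable_sqrt_one_add_deriv_sq_sub_div r)
            (hgac.intervalIntegrable_deriv.div_const r), intervalIntegral.integral_div, hg0,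
          zero_div, sub_zero]
    _ ≤ ∫ x in (-R)..R, (√(1 + deriv h x ^ 2) - h x / r) := by
        refine integral_mono_ae_restrict (by linarith)
          ((hfac.intervalIntegrable_sqrt_one_add_deriv_sq_sub_div r).sub
            (hgac.intervalIntegrable_deriv.div_const r))
          (hhac.intervalIntegrable_sqrt_one_add_deriv_sq_sub_div r) ?_
        filter_upwards [ae_restrict_mem measurableSet_Icc,
          ae_restrict_of_ae hK.ae_differentiableAt_real] with x hx hdx
        have hx' : x ∈ uIcc (-R) R := by rwa [uIcc_of_le (by linarith)]
        refine circle_calibration_le hr (hlt x hx') ?_ hdx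
        exact hf ▸ (hasDerivAt_sqrt_sq_sub_sq (hlt x hx')).sub_const _
end

section
/- Let S₁, S₂ be disjoint tangent or nearby balls in ℝ² and suppose S₂ has radius r₂. Then |Close_r(S) \ S| = O(r^{3/2}) as r → 0⁺; more precisely, Close_r(S) \ S is contained in a region of area at most C·r^{3/2} for small r, where C depends only on the radii. Consequently (1/r)|Close_r(S) \ S| → 0 as r → 0⁺. -/
/-! A point `y` of `Close_r(S) \ S` off the two spheres is within `r` of one ball, say
`r₁ < dist y x₁ < r₁ + r`, since otherwise `ball y r` misses `S`. The `r`-ball pushed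
radially outwards from `x₁` through `y` is tangent to the first ball and contains `y`, so it must
meet the second ball; for tangent balls this pins the coordinate of `y` along the line of centres
to within `2 r` of the contact point and its distance from that line to `O(√r)`. Hence
`Close_r(S) \ S` lies, up to the null spheres, in a `4 r × O(√r)` rectangle. -/

open MeasureTheory Real Set Filter Topology
open scoped ENNReal

noncomputable section

abbrev E2 := EuclideanSpace ℝ (Fin 2)

/-- The morphological opening of a set with radius `ρ`. -/
def openr (ρ : ℝ) (X : Set E2) : Set E2 :=
  ⋃ x ∈ {c : E2 | Metric.ball c ρ ⊆ X}, Metric.ball x ρ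

/-- The morphological closing of a set with radius `ρ`. -/
def closer (ρ : ℝ) (X : Set E2) : Set E2 := (openr ρ Xᶜ)ᶜ

open scoped RealInnerProductSpace

section AxisCylinder

variable {E : Type*} [NormedAddCommGroup E] [InnerProductSpace ℝ E]

/-- For a unit vector `u`: the points whose coordinate along the axis `x + ℝ u` lies in `[a, b]`
and whose distance from that axis is at most `|h|`. -/
def axisCylinder (x u : E) (a b h : ℝ) : Set E :=
  {y | ⟪y - x, u⟫ ∈ Icc a b ∧ ‖y - x‖ ^ 2 - ⟪y - x, u⟫ ^ 2 ≤ h ^ 2}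

theorem mem_axisCylinder_iff_sub_mem {x u y : E} {a b h : ℝ} :
    y ∈ axisCylinder x u a b h ↔ y - x ∈ axisCylinder 0 u a b h := by
  simp only [axisCylinder, mem_ofPred_eq, sub_zero]

theorem axisCylinder_subset_of_sq_le {x u : E} {a b h h' : ℝ} (hh : h ^ 2 ≤ h' ^ 2) :
    axisCylinder x u a b h ⊆ axisCylinder x u a b h' :=
  fun _ ⟨hax, hperp⟩ => ⟨hax, hperp.trans hh⟩

theorem axisCylinder_add_smul_neg {x u : E} (hu : ‖u‖ = 1) (D a b h : ℝ) :
    axisCylinder (x + D • u) (-u) a b h = axisCylinder x u (D - b) (D - a) h := by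
  ext y
  have hsub : y - (x + D • u) = (y - x) - D • u := by abel
  have hax : ⟪y - (x + D • u), -u⟫ = D - ⟪y - x, u⟫ := by
    rw [hsub, inner_neg_right, inner_sub_left, real_inner_smul_left, real_inner_self_eq_norm_sq,
      hu]
    ring
  have hnorm : ‖y - (x + D • u)‖ ^ 2 = ‖y - x‖ ^ 2 - 2 * D * ⟪y - x, u⟫ + D ^ 2 := by
    rw [hsub, norm_sub_sq_real, real_inner_smul_right, norm_smul, hu, Real.norm_eq_abs, mul_one,
      sq_abs]
    ring
  simp only [axisCylinder, mem_ofPred_eq, mem_Icc, hax, hnorm]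
  constructor
  · rintro ⟨⟨h₁, h₂⟩, h₃⟩
    exact ⟨⟨by linarith, by linarith⟩, by linarith⟩
  · rintro ⟨⟨h₁, h₂⟩, h₃⟩
    exact ⟨⟨by linarith, by linarith⟩, by linarith⟩

/-- The ball of radius `r` centred at `((ρ + r) / ‖z‖) • z` is tangent to the ball `ball 0 ρ`
at the point nearest to `z`; if it still meets `ball ((ρ + ρ') • u) ρ'`, then `z` lies close to the
contact point `ρ • u` of those two tangent balls. -/
theorem mem_axisCylinder_of_norm_radial_sub_lt {u z : E} {ρ ρ' r : ℝ} (hu : ‖u‖ = 1)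
    (hρ' : 0 < ρ') (hr : 0 < r) (hrρ : 2 * r ≤ ρ) (hz : ρ < ‖z‖) (hz' : ‖z‖ < ρ + r)
    (hmeet : ‖((ρ + r) / ‖z‖) • z - (ρ + ρ') • u‖ < ρ' + r) :
    z ∈ axisCylinder 0 u (ρ - 2 * r) (ρ + 2 * r) √(6 * ρ * r) := by
  set d := ‖z‖
  set t := ⟪z, u⟫
  have hρ : 0 < ρ := by linarith
  have hd : 0 < d := by linarith
  have htd : t ≤ d := by simpa [hu] using real_inner_le_norm z u
  have hexpand : ‖((ρ + r) / d) • z - (ρ + ρ') • u‖ ^ 2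
      = (ρ + r) ^ 2 - 2 * (ρ + ρ') * ((ρ + r) / d * t) + (ρ + ρ') ^ 2 := by
    rw [norm_sub_sq_real, norm_smul, norm_smul, hu, real_inner_smul_left, real_inner_smul_right,
      Real.norm_eq_abs, Real.norm_eq_abs, abs_of_pos (by positivity),
      abs_of_pos (by positivity : 0 < ρ + ρ'), div_mul_cancel₀ _ hd.ne']
    ring
  have hkt : ρ - r < (ρ + r) / d * t := by
    have hsq := pow_lt_pow_left₀ hmeet (norm_nonneg _) two_ne_zero
    rw [hexpand] at hsq
    nlinarith
  have hlow : ρ - 2 * r ≤ t := by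
    rw [div_mul_eq_mul_div, lt_div_iff₀ hd] at hkt
    nlinarith
  simp only [axisCylinder, mem_ofPred_eq, sub_zero, mem_Icc]
  refine ⟨⟨hlow, by linarith⟩, ?_⟩
  rw [Real.sq_sqrt (by positivity)]
  nlinarith

end AxisCylinder

theorem mem_closer_iff {ρ : ℝ} {X : Set E2} {y : E2} :
    y ∈ closer ρ X ↔ ∀ c, y ∈ Metric.ball c ρ → ¬Disjoint (Metric.ball c ρ) X := by
  simp only [closer, openr, mem_compl_iff, mem_iUnion, mem_ofPred_eq,
    subset_compl_iff_disjoint_right, exists_prop, not_exists, not_and]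
  exact forall_congr' fun c => ⟨fun h hy hd => h hd hy, fun h hd hy => h hy hd⟩

theorem mem_axisCylinder_of_mem_closer {x u y : E2} {ρ ρ' r : ℝ} (hu : ‖u‖ = 1) (hρ' : 0 < ρ')
    (hr : 0 < r) (hrρ : 2 * r ≤ ρ)
    (hy : y ∈ closer r (Metric.ball x ρ ∪ Metric.ball (x + (ρ + ρ') • u) ρ'))
    (hyx : ρ < dist y x) (hyx' : dist y x < ρ + r) :
    y ∈ axisCylinder x u (ρ - 2 * r) (ρ + 2 * r) √(6 * ρ * r) := by
  rw [dist_eq_norm] at hyx hyx'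
  have hd : 0 < ‖y - x‖ := by linarith
  have hρ : 0 < ρ := by linarith
  set c := x + ((ρ + r) / ‖y - x‖) • (y - x)
  have hcx : dist c x = ρ + r := by
    rw [dist_eq_norm, add_sub_cancel_left, norm_smul, Real.norm_eq_abs,
      abs_of_pos (by positivity), div_mul_cancel₀ _ hd.ne']
  have hyc : y ∈ Metric.ball c r := by
    have : y - c = (1 - (ρ + r) / ‖y - x‖) • (y - x) := by
      simp only [c, sub_smul, one_smul]; abel
    have hk : 1 ≤ (ρ + r) / ‖y - x‖ := (one_le_div hd).2 hyx'.le
    rw [Metric.mem_ball, dist_eq_norm, this, norm_smul, Real.norm_eq_abs,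
      abs_of_nonpos (by linarith), neg_sub, sub_mul, div_mul_cancel₀ _ hd.ne', one_mul]
    linarith
  have hmeet : ¬Disjoint (Metric.ball c r) (Metric.ball (x + (ρ + ρ') • u) ρ') := by
    have hfar : Disjoint (Metric.ball c r) (Metric.ball x ρ) :=
      Metric.ball_disjoint_ball (by linarith)
    intro hnear
    exact mem_closer_iff.1 hy c hyc (disjoint_union_right.2 ⟨hfar, hnear⟩)
  have hcx' : ‖((ρ + r) / ‖y - x‖) • (y - x) - (ρ + ρ') • u‖ < ρ' + r := by
    have := not_le.1 (mt Metric.ball_disjoint_ball hmeet)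
    rwa [dist_eq_norm, add_sub_add_left_eq_sub, add_comm r] at this
  exact mem_axisCylinder_iff_sub_mem.2
    (mem_axisCylinder_of_norm_radial_sub_lt hu hρ' hr hrρ hyx hyx' hcx')

theorem closer_union_tangent_balls_diff_subset {x₁ u : E2} {r₁ r₂ r : ℝ} (hu : ‖u‖ = 1)
    (hr : 0 < r) (hr₁ : 2 * r ≤ r₁) (hr₂ : 2 * r ≤ r₂) :
    closer r (Metric.ball x₁ r₁ ∪ Metric.ball (x₁ + (r₁ + r₂) • u) r₂) \
        (Metric.ball x₁ r₁ ∪ Metric.ball (x₁ + (r₁ + r₂) • u) r₂) ⊆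
      Metric.sphere x₁ r₁ ∪ Metric.sphere (x₁ + (r₁ + r₂) • u) r₂ ∪
        axisCylinder x₁ u (r₁ - 2 * r) (r₁ + 2 * r) √(6 * (r₁ + r₂) * r) := by
  set x₂ := x₁ + (r₁ + r₂) • u
  rintro y ⟨hy, hyS⟩
  simp only [mem_union, Metric.mem_ball, not_or, not_lt] at hyS
  obtain ⟨hy₁, hy₂⟩ := hyS
  rcases hy₁.eq_or_lt with hy₁ | hy₁
  · exact Or.inl (Or.inl hy₁.symm)
  rcases hy₂.eq_or_lt with hy₂ | hy₂
  · exact Or.inl (Or.inr hy₂.symm)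
  right
  have hsq : ∀ ρ, 0 ≤ ρ → ρ ≤ r₁ + r₂ → √(6 * ρ * r) ^ 2 ≤ √(6 * (r₁ + r₂) * r) ^ 2 := by
    intro ρ hρ hρD
    rw [Real.sq_sqrt (by positivity), Real.sq_sqrt (by nlinarith)]
    nlinarith
  by_cases hnear₁ : dist y x₁ < r₁ + r
  · exact axisCylinder_subset_of_sq_le (hsq r₁ (by linarith) (by linarith))
      (mem_axisCylinder_of_mem_closer hu (by linarith) hr hr₁ hy hy₁ hnear₁)
  by_cases hnear₂ : dist y x₂ < r₂ + r
  · have hx₁ : x₂ + (r₂ + r₁) • -u = x₁ := by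
      rw [smul_neg, add_comm r₂, ← sub_eq_add_neg, add_sub_cancel_right]
    have hy' := mem_axisCylinder_of_mem_closer (x := x₂) (ρ' := r₁) (by rwa [norm_neg])
      (by linarith) hr hr₂ (by rwa [hx₁, union_comm]) hy₂ hnear₂
    rw [axisCylinder_add_smul_neg hu, show r₁ + r₂ - (r₂ + 2 * r) = r₁ - 2 * r by ring,
      show r₁ + r₂ - (r₂ - 2 * r) = r₁ + 2 * r by ring] at hy'
    exact axisCylinder_subset_of_sq_le (hsq r₂ (by linarith) (by linarith)) hy'
  refine absurd (disjoint_union_right.2 ⟨?_, ?_⟩) (mem_closer_iff.1 hy y (Metric.mem_ball_self hr))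
  · exact Metric.ball_disjoint_ball (by linarith)
  · exact Metric.ball_disjoint_ball (by linarith)

theorem exists_orthonormalBasis_apply_eq {𝕜 F ι : Type*} [RCLike 𝕜] [NormedAddCommGroup F]
    [InnerProductSpace 𝕜 F] [FiniteDimensional 𝕜 F] [Fintype ι]
    (card_ι : Module.finrank 𝕜 F = Fintype.card ι) (i : ι) {u : F} (hu : ‖u‖ = 1) :
    ∃ e : OrthonormalBasis ι 𝕜 F, e i = u := by
  obtain ⟨e, he⟩ := Orthonormal.exists_orthonormalBasis_extension_of_card_eq card_ι
    (v := fun _ => u) (s := {i}) (by simp [hu])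
  exact ⟨e, he i rfl⟩

theorem volume_axisCylinder {x u : E2} (hu : ‖u‖ = 1) (a b : ℝ) {h : ℝ} (hh : 0 ≤ h) :
    volume (axisCylinder x u a b h) = ENNReal.ofReal (b - a) * ENNReal.ofReal (2 * h) := by
  obtain ⟨e, he⟩ := exists_orthonormalBasis_apply_eq
    (by simp : Module.finrank ℝ E2 = Fintype.card (Fin 2)) 0 hu
  set g : E2 → Fin 2 → ℝ := fun y => (e.repr (y - x)).ofLp
  have hg : MeasurePreserving g volume volume :=
    (PiLp.volume_preserving_ofLp _).comp
      (e.measurePreserving_repr.comp (measurePreserving_sub_right volume x))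
  have hbox : axisCylinder x u a b h = g ⁻¹' univ.pi fun i => Icc (![a, -h] i) (![b, h] i) := by
    ext y
    have hax : ⟪y - x, u⟫ = g y 0 := by
      change _ = e.repr (y - x) 0
      rw [e.repr_apply_apply, he, real_inner_comm]
    have hnorm : ‖y - x‖ ^ 2 = g y 0 ^ 2 + g y 1 ^ 2 := by
      rw [← e.repr.norm_map, EuclideanSpace.real_norm_sq_eq, Fin.sum_univ_two]
    simp only [axisCylinder, mem_ofPred_eq, hax, hnorm, add_sub_cancel_left, mem_preimage,
      mem_univ_pi, Fin.forall_fin_two, Matrix.cons_val_zero, Matrix.cons_val_one, mem_Icc]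
    exact and_congr_right' ⟨fun h' => abs_le_of_sq_le_sq' h' hh, fun h' => sq_le_sq' h'.1 h'.2⟩
  rw [hbox, hg.measure_preimage
    (MeasurableSet.univ_pi fun _ => measurableSet_Icc).nullMeasurableSet, volume_pi_pi,
    Fin.prod_univ_two]
  simp only [Real.volume_Icc, Matrix.cons_val_zero, Matrix.cons_val_one, sub_neg_eq_add, two_mul]

theorem toReal_volume_closer_union_tangent_balls_diff_le {x₁ u : E2} {r₁ r₂ r : ℝ}
    (hu : ‖u‖ = 1) (hr : 0 < r) (hr₁ : 2 * r ≤ r₁) (hr₂ : 2 * r ≤ r₂) :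
    (volume (closer r (Metric.ball x₁ r₁ ∪ Metric.ball (x₁ + (r₁ + r₂) • u) r₂) \
        (Metric.ball x₁ r₁ ∪ Metric.ball (x₁ + (r₁ + r₂) • u) r₂))).toReal ≤
      8 * √(6 * (r₁ + r₂)) * r ^ (3 / 2 : ℝ) := by
  have hr32 : r ^ (3 / 2 : ℝ) = r * √r := by
    rw [Real.sqrt_eq_rpow, ← Real.rpow_one_add' hr.le (by norm_num)]
    norm_num
  have harea : 4 * r * (2 * √(6 * (r₁ + r₂) * r)) = 8 * √(6 * (r₁ + r₂)) * r ^ (3 / 2 : ℝ) := by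
    rw [Real.sqrt_mul (by linarith), hr32]
    ring
  refine ENNReal.toReal_le_of_le_ofReal (by positivity) ?_
  calc _ ≤ volume (Metric.sphere x₁ r₁ ∪ Metric.sphere (x₁ + (r₁ + r₂) • u) r₂ ∪
          axisCylinder x₁ u (r₁ - 2 * r) (r₁ + 2 * r) √(6 * (r₁ + r₂) * r)) :=
        measure_mono (closer_union_tangent_balls_diff_subset hu hr hr₁ hr₂)
    _ ≤ volume (Metric.sphere x₁ r₁ ∪ Metric.sphere (x₁ + (r₁ + r₂) • u) r₂) +
          volume (axisCylinder x₁ u (r₁ - 2 * r) (r₁ + 2 * r) √(6 * (r₁ + r₂) * r)) :=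
        measure_union_le _ _
    _ = ENNReal.ofReal (8 * √(6 * (r₁ + r₂)) * r ^ (3 / 2 : ℝ)) := by
      rw [measure_union_null (Measure.addHaar_sphere _ _ _) (Measure.addHaar_sphere _ _ _),
        zero_add, volume_axisCylinder hu _ _ (Real.sqrt_nonneg _), ← harea,
        show r₁ + 2 * r - (r₁ - 2 * r) = 4 * r by ring,
        ← ENNReal.ofReal_mul (by positivity)]

theorem tendsto_one_div_mul_of_le_mul_rpow {f : ℝ → ℝ} {C p : ℝ} (hp : 1 < p)
    (hf₀ : ∀ r, 0 ≤ f r) (hf : ∀ᶠ r in 𝓝[>] 0, f r ≤ C * r ^ p) :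
    Tendsto (fun r => 1 / r * f r) (𝓝[>] 0) (𝓝 0) := by
  have hlim : Tendsto (fun r : ℝ => C * r ^ (p - 1)) (𝓝[>] 0) (𝓝 0) := by
    have := ((Real.continuousAt_rpow_const 0 (p - 1) (Or.inr (by linarith))).tendsto.const_mul C)
    rw [Real.zero_rpow (by linarith), mul_zero] at this
    exact this.mono_left nhdsWithin_le_nhds
  refine squeeze_zero' ?_ ?_ hlim
  · filter_upwards [self_mem_nhdsWithin] with r (hr : 0 < r)
    exact mul_nonneg (by positivity) (hf₀ r)
  · filter_upwards [hf, self_mem_nhdsWithin] with r hfr (hr : 0 < r)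
    calc 1 / r * f r ≤ 1 / r * (C * r ^ p) := by gcongr
      _ = C * r ^ (p - 1) := by rw [Real.rpow_sub_one hr.ne']; ring

theorem closing_excess_area_small_general
    (x₁ x₂ : E2) (r₁ r₂ : ℝ) (hr₁ : 0 < r₁) (hr₂ : 0 < r₂)
    (S : Set E2) (hSdef : S = Metric.ball x₁ r₁ ∪ Metric.ball x₂ r₂)
    (htangent : dist x₁ x₂ = r₁ + r₂) :
    (∃ C : ℝ, 0 < C ∧ ∀ᶠ r in 𝓝[>] (0 : ℝ),
      (volume (closer r S \ S)).toReal ≤ C * r ^ ((3 : ℝ) / 2))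
    ∧ Tendsto (fun r : ℝ => (1 / r) * (volume (closer r S \ S)).toReal)
        (𝓝[>] (0 : ℝ)) (𝓝 0) := by
  set u := (r₁ + r₂)⁻¹ • (x₂ - x₁)
  have hD : r₁ + r₂ ≠ 0 := by positivity
  have hu : ‖u‖ = 1 := by
    rw [norm_smul, ← dist_eq_norm', htangent, norm_inv, Real.norm_eq_abs,
      abs_of_pos (by positivity), inv_mul_cancel₀ hD]
  have hx₂ : x₂ = x₁ + (r₁ + r₂) • u := by
    rw [smul_inv_smul₀ hD, add_sub_cancel]
  have hbound : ∀ᶠ r in 𝓝[>] (0 : ℝ),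
      (volume (closer r S \ S)).toReal ≤ 8 * √(6 * (r₁ + r₂)) * r ^ ((3 : ℝ) / 2) := by
    filter_upwards [Ioo_mem_nhdsGT (by positivity : (0 : ℝ) < min r₁ r₂ / 2)] with r ⟨hr, hr'⟩
    rw [hSdef, hx₂]
    exact toReal_volume_closer_union_tangent_balls_diff_le hu hr
      (by linarith [min_le_left r₁ r₂]) (by linarith [min_le_right r₁ r₂])
  exact ⟨⟨_, by positivity, hbound⟩,
    tendsto_one_div_mul_of_le_mul_rpow (by norm_num) (fun _ => ENNReal.toReal_nonneg) hbound⟩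

/-- For `S` the union of two tangent balls, `|Close_r(S) \ S| = O(r^{3/2})`
as `r → 0⁺`: there is a constant `C > 0` (depending only on the radii) with
`|Close_r(S) \ S| ≤ C·r^{3/2}` for all small `r > 0`; consequently
`(1/r)|Close_r(S) \ S| → 0` as `r → 0⁺`. -/
theorem closing_excess_area_small
    (x₁ x₂ : E2) (r₁ r₂ : ℝ) (hr₁ : 0 < r₁) (hr₂ : 0 < r₂)
    (S : Set E2) (hSdef : S = Metric.ball x₁ r₁ ∪ Metric.ball x₂ r₂)
    (hdisj : Disjoint (Metric.ball x₁ r₁) (Metric.ball x₂ r₂))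
    (htangent : dist x₁ x₂ = r₁ + r₂) :
    (∃ C : ℝ, 0 < C ∧ ∀ᶠ r in 𝓝[>] (0 : ℝ),
      (volume (closer r S \ S)).toReal ≤ C * r ^ ((3 : ℝ) / 2))
    ∧ Tendsto (fun r : ℝ => (1 / r) * (volume (closer r S \ S)).toReal)
        (𝓝[>] (0 : ℝ)) (𝓝 0) :=
  closing_excess_area_small_general x₁ x₂ r₁ r₂ hr₁ hr₂ S hSdef htangent

end
end
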